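/- arXiv:1006.5141 — 2 statements merged into one kernel-verified Lean document; each statement's English description precedes it below -/
import Mathlib

section
/- Let P be a countable Köthe set on a set I with P ≺ P², and let A = λ(P) with pointwise multiplication. If A² = A, where A² is the linear span of {ab : a, b ∈ A}, then P ∼ P² (i.e., P satisfies condition (B): for each p ∈ P there exist q ∈ P and C > 0 with q_i² ≤ C p_i for all i, in addition to P ≺ P²). -/
/-!
Each element `x` of `A²` satisfies `sup_i |x_i| q_i² < ∞` for every `q ∈ P`: for `b, c ∈ A` both
`|b_i| q_i` and `|c_i| q_i` are summable, hence bounded, and such bounds survive linear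
combinations.
Conversely, if (B) fails for `q`, take an increasing cofinal sequence `r_n` in `P` (which is
countable and directed) and indices `i_n` with `(n+1)³ r_n(i_n) < q(i_n)²`. Then
`a = ∑_n (n+1) / q(i_n)² e_{i_n}` lies in `λ(P)`, since against any `p ≤ r_m` its tail is dominated
by `∑ 1/(n+1)²`, while `|a_{i_n}| q(i_n)² ≥ n+1`. So `a ∈ A \ A²`.
-/

open Set Filter

def kotheSpace {I : Type*} (P : Set (I → ℝ)) : Set (I → ℂ) :=
  {x | ∀ p ∈ P, Summable fun i => ‖x i‖ * p i}

theorem DirectedOn.exists_monotone_seq_cofinal {β : Type*} [Preorder β] {P : Set β}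
    (hdir : DirectedOn (· ≤ ·) P) (hP : P.Countable) (hne : P.Nonempty) :
    ∃ r : ℕ → β, (∀ n, r n ∈ P) ∧ Monotone r ∧ ∀ p ∈ P, ∃ n, p ≤ r n := by
  have := hP.toEncodable
  have : Inhabited P := ⟨⟨_, hne.some_mem⟩⟩
  have hd : Directed (· ≤ ·) (Subtype.val : P → β) := hdir.directed_val
  exact ⟨fun n => hd.sequence _ n, fun n => (hd.sequence _ n).2, hd.sequence_mono,
    fun p hp => ⟨_, hd.le_sequence ⟨p, hp⟩⟩⟩

section Fiber

variable {β I : Type*} {g : β → I} {c : β → ℝ}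

theorem ofReal_tsum_fiber_mem_kotheSpace {P : Set (I → ℝ)} (hc : 0 ≤ c)
    (hsum : ∀ p ∈ P, Summable fun n => c n * p (g n)) :
    (fun i => ((∑' n : g ⁻¹' {i}, c n : ℝ) : ℂ)) ∈ kotheSpace P := by
  intro p hp
  refine (((hsum p hp).hasSum.tsum_fiberwise g).summable).congr fun i => ?_
  rw [Complex.norm_real, Real.norm_of_nonneg (tsum_nonneg fun n : g ⁻¹' {i} => hc n),
    ← tsum_mul_right]
  exact tsum_congr fun n => by rw [Set.mem_singleton_iff.mp n.2]

theorem mul_le_tsum_fiber_mul {q : I → ℝ} (hc : 0 ≤ c) (hq : 0 ≤ q)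
    (hsum : Summable fun n => c n * q (g n)) (n : β) :
    c n * q (g n) ≤ (∑' m : g ⁻¹' {g n}, c m) * q (g n) := by
  rw [← tsum_mul_right]
  calc c n * q (g n) ≤ ∑' m : g ⁻¹' {g n}, c m * q (g m) :=
        (hsum.subtype (g ⁻¹' {g n})).le_tsum ⟨n, rfl⟩ fun m _ => mul_nonneg (hc m.1) (hq _)
    _ = ∑' m : g ⁻¹' {g n}, c m * q (g n) :=
        tsum_congr fun m => by rw [Set.mem_singleton_iff.mp m.2]

end Fiber

section Span

variable {I 𝕜 : Type*} [NormedField 𝕜]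

theorem memℓp_infty_mul_of_mem_span {S : Set (I → 𝕜)} {w : I → 𝕜}
    (hS : ∀ x ∈ S, Memℓp (x * w) ⊤) {x : I → 𝕜} (hx : x ∈ Submodule.span 𝕜 S) :
    Memℓp (x * w) ⊤ := by
  induction hx using Submodule.span_induction with
  | mem x hx => exact hS x hx
  | zero => simpa using zero_memℓp
  | add x y _ _ hx hy => simpa [add_mul] using hx.add hy
  | smul a x _ hx => simpa [smul_mul_assoc] using hx.const_smul a

theorem Memℓp.infty_mul_mul_mul {b c w : I → 𝕜} (hb : Memℓp (b * w) ⊤) (hc : Memℓp (c * w) ⊤) :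
    Memℓp (b * c * (w * w)) ⊤ := by
  simpa [mul_mul_mul_comm] using hb.infty_mul hc

end Span

section Kothe

variable {I : Type*} {P : Set (I → ℝ)}

theorem memℓp_infty_mul_of_mem_kotheSpace {x : I → ℂ} (hx : x ∈ kotheSpace P) {p : I → ℝ}
    (hp : p ∈ P) (hp0 : 0 ≤ p) : Memℓp (x * fun i => (p i : ℂ)) ⊤ := by
  have h1 : Memℓp (x * fun i => (p i : ℂ)) 1 := by
    rw [memℓp_gen_iff (by simp)]
    simpa [Complex.norm_real, abs_of_nonneg (hp0 _)] using hx p hp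
  exact h1.of_exponent_ge le_top

theorem bddAbove_norm_mul_sq_of_mem_span_mul {q : I → ℝ} (hq : q ∈ P) (hq0 : 0 ≤ q)
    {x : I → ℂ} (hx : x ∈ Submodule.span ℂ
      {x : I → ℂ | ∃ b ∈ kotheSpace P, ∃ c ∈ kotheSpace P, x = fun i => b i * c i}) :
    BddAbove (range fun i => ‖x i‖ * q i ^ 2) := by
  set w : I → ℂ := fun i => q i
  have hxw : Memℓp (x * (w * w)) ⊤ := by
    refine memℓp_infty_mul_of_mem_span ?_ hx
    rintro _ ⟨b, hb, c, hc, rfl⟩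
    exact (memℓp_infty_mul_of_mem_kotheSpace hb hq hq0).infty_mul_mul_mul
      (memℓp_infty_mul_of_mem_kotheSpace hc hq hq0)
  rw [memℓp_infty_iff] at hxw
  convert hxw using 3 with i
  simp [w, Complex.norm_real, sq]

theorem summable_succ_div_sq_mul_of_le {r : ℕ → I → ℝ} (hr_mono : Monotone r)
    {q : I → ℝ} {idx : ℕ → I} (hidx : ∀ n : ℕ, ((n : ℝ) + 1) ^ 3 * r n (idx n) < q (idx n) ^ 2)
    (hq_pos : ∀ n, 0 < q (idx n)) {p : I → ℝ} (hp0 : 0 ≤ p) {m : ℕ} (hm : p ≤ r m) :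
    Summable fun n : ℕ => ((n : ℝ) + 1) / q (idx n) ^ 2 * p (idx n) := by
  have h_inv_sq : Summable fun n : ℕ => 1 / ((n : ℝ) + 1) ^ 2 := by
    simpa using (summable_nat_add_iff 1).mpr (Real.summable_one_div_nat_pow.mpr one_lt_two)
  refine h_inv_sq.of_norm_bounded_eventually_nat ?_
  filter_upwards [eventually_ge_atTop m] with n hn
  have hc0 : 0 ≤ ((n : ℝ) + 1) / q (idx n) ^ 2 := by positivity
  rw [Real.norm_of_nonneg (mul_nonneg hc0 (hp0 _))]
  calc ((n : ℝ) + 1) / q (idx n) ^ 2 * p (idx n)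
      ≤ ((n : ℝ) + 1) / q (idx n) ^ 2 * r n (idx n) :=
        mul_le_mul_of_nonneg_left ((hm.trans (hr_mono hn)) (idx n)) hc0
    _ ≤ 1 / ((n : ℝ) + 1) ^ 2 := by
        rw [div_mul_eq_mul_div, div_le_div_iff₀ (pow_pos (hq_pos n) 2) (by positivity)]
        nlinarith [hidx n]

theorem exists_mem_kotheSpace_not_bddAbove (hP : P.Countable) (hP0 : ∀ p ∈ P, 0 ≤ p)
    (hdir : DirectedOn (· ≤ ·) P) {q : I → ℝ} (hq : q ∈ P)
    (hq2 : ∀ p ∈ P, ∀ C : ℝ, 0 < C → ∃ i, C * p i < q i ^ 2) :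
    ∃ a ∈ kotheSpace P, ¬ BddAbove (range fun i => ‖a i‖ * q i ^ 2) := by
  obtain ⟨r, hrP, hr_mono, hr_cofinal⟩ := hdir.exists_monotone_seq_cofinal hP ⟨q, hq⟩
  choose idx hidx using fun n : ℕ => hq2 (r n) (hrP n) (((n : ℝ) + 1) ^ 3) (by positivity)
  have hq_pos : ∀ n, 0 < q (idx n) := fun n => by
    have hsq : 0 < q (idx n) ^ 2 :=
      (mul_nonneg (by positivity) (hP0 _ (hrP n) (idx n))).trans_lt (hidx n)
    exact (hP0 q hq _).lt_of_ne fun h => by simp [← h] at hsq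
  set c : ℕ → ℝ := fun n => ((n : ℝ) + 1) / q (idx n) ^ 2
  have hc0 : 0 ≤ c := fun n => by positivity
  have hsum : ∀ p ∈ P, Summable fun n => c n * p (idx n) := fun p hp =>
    let ⟨_, hm⟩ := hr_cofinal p hp
    summable_succ_div_sq_mul_of_le hr_mono hidx hq_pos (hP0 p hp) hm
  refine ⟨_, ofReal_tsum_fiber_mem_kotheSpace hc0 hsum, fun ⟨K, hK⟩ => ?_⟩
  obtain ⟨n, hn⟩ := exists_nat_gt K
  have hlow := mul_le_tsum_fiber_mul hc0 (hP0 q hq) (hsum q hq) n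
  have hcq : c n * q (idx n) * q (idx n) = (n : ℝ) + 1 := by
    rw [mul_assoc, ← sq]; exact div_mul_cancel₀ _ (pow_ne_zero 2 (hq_pos n).ne')
  have hK_ge : (n : ℝ) + 1 ≤ K := calc (n : ℝ) + 1 = c n * q (idx n) * q (idx n) := hcq.symm
    _ ≤ (∑' m : idx ⁻¹' {idx n}, c m) * q (idx n) * q (idx n) :=
        mul_le_mul_of_nonneg_right hlow (hq_pos n).le
    _ = ‖((∑' m : idx ⁻¹' {idx n}, c m : ℝ) : ℂ)‖ * q (idx n) ^ 2 := by
        rw [Complex.norm_real, Real.norm_of_nonneg (tsum_nonneg fun m => hc0 _)]; ring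
    _ ≤ K := hK (mem_range_self (idx n))
  linarith

end Kothe

theorem kothe_condB_of_idempotent_general {I : Type*} (P : Set (I → ℝ))
    (hPcount : P.Countable)
    (hP0 : ∀ p ∈ P, ∀ i, 0 ≤ p i)
    (hP2 : ∀ p ∈ P, ∀ q ∈ P, ∃ r ∈ P, ∀ i, max (p i) (q i) ≤ r i)
    (Λ : Set (I → ℂ))
    (hΛ : Λ = {x | ∀ p ∈ P, Summable fun i => ‖x i‖ * p i})
    (hA2 : ∀ a ∈ Λ, a ∈ Submodule.span ℂ
      {x : I → ℂ | ∃ b ∈ Λ, ∃ c ∈ Λ, x = fun i => b i * c i}) :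
    ∀ q ∈ P, ∃ p ∈ P, ∃ C : ℝ, 0 < C ∧ ∀ i, (q i) ^ 2 ≤ C * p i := by
  subst hΛ
  have hdir : DirectedOn (· ≤ ·) P := fun p hp q hq => by
    obtain ⟨r, hr, hpq⟩ := hP2 p hp q hq
    exact ⟨r, hr, fun i => (le_max_left _ _).trans (hpq i),
      fun i => (le_max_right _ _).trans (hpq i)⟩
  intro q hq
  by_contra! hq2
  obtain ⟨a, ha, ha_unbdd⟩ := exists_mem_kotheSpace_not_bddAbove hPcount hP0 hdir hq hq2
  exact ha_unbdd (bddAbove_norm_mul_sq_of_mem_span_mul hq (hP0 q hq) (hA2 a ha))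

/-- If `P` is a countable Köthe set with `P ≺ P²` and the algebra
`A = λ(P)` satisfies `A² = A` (where `A²` is the linear span of products), then `P`
satisfies condition (B), i.e. `P ∼ P²`. -/
theorem kothe_condB_of_idempotent {I : Type*} (P : Set (I → ℝ))
    (hPcount : P.Countable)
    (hP0 : ∀ p ∈ P, ∀ i, 0 ≤ p i)
    (hP1 : ∀ i, ∃ p ∈ P, 0 < p i)
    (hP2 : ∀ p ∈ P, ∀ q ∈ P, ∃ r ∈ P, ∀ i, max (p i) (q i) ≤ r i)
    (hPP2 : ∀ p ∈ P, ∃ q ∈ P, ∃ C : ℝ, 0 < C ∧ ∀ i, p i ≤ C * (q i) ^ 2)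
    (Λ : Set (I → ℂ))
    (hΛ : Λ = {x | ∀ p ∈ P, Summable fun i => ‖x i‖ * p i})
    (hA2 : ∀ a ∈ Λ, a ∈ Submodule.span ℂ
      {x : I → ℂ | ∃ b ∈ Λ, ∃ c ∈ Λ, x = fun i => b i * c i}) :
    ∀ q ∈ P, ∃ p ∈ P, ∃ C : ℝ, 0 < C ∧ ∀ i, (q i) ^ 2 ≤ C * p i :=
  kothe_condB_of_idempotent_general P hPcount hP0 hP2 Λ hΛ hA2
end

section
/- Let P be a Köthe set on a set I with P ≺ P². Then the space λ^∞(P) = { a ∈ ℂ^I : ‖a‖_p^∞ := sup_{i∈I} |a_i| p_i < ∞ for all p ∈ P } is closed under pointwise multiplication, and for every p ∈ P there exist q ∈ P and C > 0 such that sup_{i∈I} |a_i b_i| p_i ≤ C (sup_{i∈I} |a_i| q_i)(sup_{i∈I} |b_i| q_i) for all a, b ∈ λ^∞(P). -/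
/-! If `p ≤ C q²`, then `‖aᵢbᵢ‖ pᵢ ≤ C (‖aᵢ‖ qᵢ)(‖bᵢ‖ qᵢ)` pointwise, and bounding each factor on
the right by its supremum gives both the closedness of `λ^∞(P)` under multiplication and the
estimate. -/

open Set

lemma norm_mul_mul_le_of_le_mul_sq {R : Type*} [SeminormedRing R] (x y : R) {p q C : ℝ}
    (hC : 0 ≤ C) (hpq : p ≤ C * q ^ 2) : ‖x * y‖ * p ≤ C * (‖x‖ * q) * (‖y‖ * q) :=
  calc ‖x * y‖ * p ≤ ‖x * y‖ * (C * q ^ 2) := by gcongr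
    _ ≤ ‖x‖ * ‖y‖ * (C * q ^ 2) := by gcongr; exact norm_mul_le x y
    _ = C * (‖x‖ * q) * (‖y‖ * q) := by ring

lemma le_mul_iSup_mul_iSup {ι : Type*} {f g h : ι → ℝ} {C : ℝ} (hC : 0 ≤ C)
    (hf₀ : ∀ i, 0 ≤ f i) (hg₀ : ∀ i, 0 ≤ g i)
    (hf : BddAbove (range f)) (hg : BddAbove (range g))
    (hfg : ∀ i, h i ≤ C * f i * g i) (i : ι) : h i ≤ C * (⨆ i, f i) * ⨆ i, g i := by
  have hF₀ : 0 ≤ ⨆ i, f i := Real.iSup_nonneg hf₀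
  calc h i ≤ C * f i * g i := hfg i
    _ ≤ C * (⨆ i, f i) * ⨆ i, g i := by
      rw [mul_assoc, mul_assoc]
      gcongr
      exacts [hg₀ i, le_ciSup hf i, le_ciSup hg i]

lemma iSup_le_mul_iSup_mul_iSup {ι : Type*} {f g h : ι → ℝ} {C : ℝ} (hC : 0 ≤ C)
    (hf₀ : ∀ i, 0 ≤ f i) (hg₀ : ∀ i, 0 ≤ g i)
    (hf : BddAbove (range f)) (hg : BddAbove (range g))
    (hfg : ∀ i, h i ≤ C * f i * g i) : ⨆ i, h i ≤ C * (⨆ i, f i) * ⨆ i, g i :=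
  Real.iSup_le (le_mul_iSup_mul_iSup hC hf₀ hg₀ hf hg hfg)
    (mul_nonneg (mul_nonneg hC (Real.iSup_nonneg hf₀)) (Real.iSup_nonneg hg₀))

theorem kothe_infty_mul_estimate_general {I : Type*} (P : Set (I → ℝ))
    (hP0 : ∀ p ∈ P, ∀ i, 0 ≤ p i)
    (hPP2 : ∀ p ∈ P, ∃ q ∈ P, ∃ C : ℝ, 0 < C ∧ ∀ i, p i ≤ C * (q i) ^ 2) :
    (∀ a b : I → ℂ,
      (∀ p ∈ P, ∃ M : ℝ, ∀ i, ‖a i‖ * p i ≤ M) →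
      (∀ p ∈ P, ∃ M : ℝ, ∀ i, ‖b i‖ * p i ≤ M) →
      (∀ p ∈ P, ∃ M : ℝ, ∀ i, ‖a i * b i‖ * p i ≤ M)) ∧
    (∀ p ∈ P, ∃ q ∈ P, ∃ C : ℝ, 0 < C ∧
      ∀ a b : I → ℂ,
        (∀ p' ∈ P, ∃ M : ℝ, ∀ i, ‖a i‖ * p' i ≤ M) →
        (∀ p' ∈ P, ∃ M : ℝ, ∀ i, ‖b i‖ * p' i ≤ M) →
        (⨆ i, ‖a i * b i‖ * p i) ≤
          C * (⨆ i, ‖a i‖ * q i) * (⨆ i, ‖b i‖ * q i)) := by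
  have bdd : ∀ a : I → ℂ, (∀ p ∈ P, ∃ M : ℝ, ∀ i, ‖a i‖ * p i ≤ M) →
      ∀ q ∈ P, BddAbove (range fun i => ‖a i‖ * q i) := fun a ha q hq =>
    let ⟨M, hM⟩ := ha q hq
    ⟨M, forall_mem_range.2 hM⟩
  have nonneg : ∀ a : I → ℂ, ∀ q ∈ P, ∀ i, 0 ≤ ‖a i‖ * q i := fun a q hq i =>
    mul_nonneg (norm_nonneg _) (hP0 q hq i)
  refine ⟨fun a b ha hb p hp => ?_, fun p hp => ?_⟩
  · obtain ⟨q, hq, C, hC, hpq⟩ := hPP2 p hp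
    exact ⟨_, le_mul_iSup_mul_iSup hC.le (nonneg a q hq) (nonneg b q hq) (bdd a ha q hq)
      (bdd b hb q hq) fun i => norm_mul_mul_le_of_le_mul_sq _ _ hC.le (hpq i)⟩
  · obtain ⟨q, hq, C, hC, hpq⟩ := hPP2 p hp
    exact ⟨q, hq, C, hC, fun a b ha hb =>
      iSup_le_mul_iSup_mul_iSup hC.le (nonneg a q hq) (nonneg b q hq) (bdd a ha q hq)
        (bdd b hb q hq) fun i => norm_mul_mul_le_of_le_mul_sq _ _ hC.le (hpq i)⟩

/-- If `P ≺ P²`, then `λ^∞(P)` is closed under pointwise multiplication, and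
for every `p ∈ P` there are `q ∈ P` and `C > 0` with
`sup_i |aᵢbᵢ| pᵢ ≤ C (sup_i |aᵢ| qᵢ)(sup_i |bᵢ| qᵢ)` for all `a, b ∈ λ^∞(P)`. -/
theorem kothe_infty_mul_estimate {I : Type*} (P : Set (I → ℝ))
    (hP0 : ∀ p ∈ P, ∀ i, 0 ≤ p i)
    (hP1 : ∀ i, ∃ p ∈ P, 0 < p i)
    (hP2 : ∀ p ∈ P, ∀ q ∈ P, ∃ r ∈ P, ∀ i, max (p i) (q i) ≤ r i)
    (hPP2 : ∀ p ∈ P, ∃ q ∈ P, ∃ C : ℝ, 0 < C ∧ ∀ i, p i ≤ C * (q i) ^ 2) :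
    (∀ a b : I → ℂ,
      (∀ p ∈ P, ∃ M : ℝ, ∀ i, ‖a i‖ * p i ≤ M) →
      (∀ p ∈ P, ∃ M : ℝ, ∀ i, ‖b i‖ * p i ≤ M) →
      (∀ p ∈ P, ∃ M : ℝ, ∀ i, ‖a i * b i‖ * p i ≤ M)) ∧
    (∀ p ∈ P, ∃ q ∈ P, ∃ C : ℝ, 0 < C ∧
      ∀ a b : I → ℂ,
        (∀ p' ∈ P, ∃ M : ℝ, ∀ i, ‖a i‖ * p' i ≤ M) →
        (∀ p' ∈ P, ∃ M : ℝ, ∀ i, ‖b i‖ * p' i ≤ M) →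
        (⨆ i, ‖a i * b i‖ * p i) ≤
          C * (⨆ i, ‖a i‖ * q i) * (⨆ i, ‖b i‖ * q i)) :=
  kothe_infty_mul_estimate_general P hP0 hPP2
end
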